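/- Let l ≥ 4 and (p₁, …, p_l) be as in the context. For every integer n with 0 ≤ n ≤ N₀, one has Δ(n) ≥ 1 if and only if n ∈ G, where G = {Σᵢ xᵢ·(P/pᵢ) : x₁, …, x_l ∈ ℕ} is the numerical semigroup generated by the numbers P/pᵢ (i = 1, …, l), containing 0. -/

import Mathlib

/-!
Write `qᵢ = P / pᵢ`. Reducing the defining identity of `e₀` modulo `pᵢ` shows that `-pᵢ'` is an
inverse of `qᵢ` modulo `pᵢ`. Hence in any representation `n = ∑ xᵢ qᵢ` the coefficient `xᵢ` is
congruent to `-n pᵢ'`, so it is at least the least nonnegative residue `rᵢ(n)` of `-n pᵢ'`, and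
`n ∈ G` iff `S(n) := ∑ rᵢ(n) qᵢ ≤ n` (the difference `n - S(n)` is a multiple of `P = pᵢ qᵢ`, which
can be added to any one coefficient). On the other hand `pᵢ ⌈n pᵢ' / pᵢ⌉ = n pᵢ' + rᵢ(n)`, and
summing these turns the definition of `Δ` into `P (Δ(n) - 1) = n - S(n)`.
-/

open Finset

section CofactorSemigroup

variable {ι : Type*} (p p' : ι → ℕ)

def minCoeff (n : ℤ) (i : ι) : ℤ := -(n * p' i) % p i

lemma minCoeff_nonneg (hp : ∀ i, 0 < p i) (n : ℤ) (i : ι) : 0 ≤ minCoeff p p' n i :=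
  Int.emod_nonneg _ (by exact_mod_cast (hp i).ne')

variable [Fintype ι] [DecidableEq ι]

def cofactor (i : ι) : ℕ := ∏ j ∈ univ.erase i, p j

lemma mul_cofactor (i : ι) : p i * cofactor p i = ∏ j, p j :=
  mul_prod_erase _ _ (mem_univ i)

lemma dvd_cofactor {i j : ι} (hij : i ≠ j) : p i ∣ cofactor p j :=
  dvd_prod_of_mem _ (mem_erase.mpr ⟨hij, mem_univ i⟩)

def minSum (n : ℤ) : ℤ := ∑ i, minCoeff p p' n i * cofactor p i

lemma dvd_cofactor_mul_add_one {e₀ : ℤ}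
    (heq : e₀ * ∏ i, (p i : ℤ) + ∑ i, (cofactor p i : ℤ) * p' i = -1) (i : ι) :
    (p i : ℤ) ∣ cofactor p i * p' i + 1 := by
  have hsplit : (cofactor p i : ℤ) * p' i + 1
      = -(e₀ * ∏ j, (p j : ℤ)) - ∑ j ∈ univ.erase i, (cofactor p j : ℤ) * p' j := by
    linear_combination heq + (add_sum_erase _ (fun j ↦ (cofactor p j : ℤ) * p' j) (mem_univ i))
  rw [hsplit]
  refine dvd_sub (dvd_neg.mpr (dvd_mul_of_dvd_right (dvd_prod_of_mem _ (mem_univ i)) _))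
    (dvd_sum fun j hj ↦ dvd_mul_of_dvd_left ?_ _)
  exact Int.natCast_dvd_natCast.mpr (dvd_cofactor p (ne_of_mem_erase hj).symm)

variable {p p'}

lemma dvd_sum_mul_cofactor_mul_add (hinv : ∀ i, (p i : ℤ) ∣ cofactor p i * p' i + 1)
    (x : ι → ℤ) (i : ι) :
    (p i : ℤ) ∣ (∑ j, x j * cofactor p j) * p' i + x i := by
  rw [← add_sum_erase _ _ (mem_univ i)]
  have hsplit : (x i * cofactor p i + ∑ j ∈ univ.erase i, x j * cofactor p j) * p' i + x i
      = x i * (cofactor p i * p' i + 1) + (∑ j ∈ univ.erase i, x j * cofactor p j) * p' i := by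
    ring
  rw [hsplit]
  refine dvd_add (dvd_mul_of_dvd_right (hinv i) _)
    (dvd_mul_of_dvd_left (dvd_sum fun j hj ↦ dvd_mul_of_dvd_right ?_ _) _)
  exact Int.natCast_dvd_natCast.mpr (dvd_cofactor p (ne_of_mem_erase hj).symm)

lemma minCoeff_sum_mul_cofactor_le (hinv : ∀ i, (p i : ℤ) ∣ cofactor p i * p' i + 1)
    {x : ι → ℤ} (hx : ∀ i, 0 ≤ x i) (i : ι) :
    minCoeff p p' (∑ j, x j * cofactor p j) i ≤ x i := by
  have hmod : -((∑ j, x j * cofactor p j) * p' i) ≡ x i [ZMOD p i] :=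
    Int.modEq_iff_dvd.mpr (by
      simpa only [sub_neg_eq_add, add_comm] using dvd_sum_mul_cofactor_mul_add hinv x i)
  rw [minCoeff, hmod, Int.emod_def]
  nlinarith [Int.ediv_nonneg (hx i) (Int.natCast_nonneg (p i)), Int.natCast_nonneg (p i)]

theorem exists_repr_iff_minSum_le [Nonempty ι] (hp : ∀ i, 0 < p i)
    (hinv : ∀ i, (p i : ℤ) ∣ cofactor p i * p' i + 1) {n : ℕ}
    (hdvd : (∏ i, (p i : ℤ)) ∣ n - minSum p p' n) :
    (∃ x : ι → ℕ, n = ∑ i, x i * cofactor p i) ↔ minSum p p' n ≤ n := by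
  constructor
  · rintro ⟨x, rfl⟩
    push_cast
    exact sum_le_sum fun i _ ↦ mul_le_mul_of_nonneg_right
      (minCoeff_sum_mul_cofactor_le hinv (fun j ↦ Int.natCast_nonneg (x j)) i)
      (Int.natCast_nonneg _)
  · intro hle
    obtain ⟨k, hk⟩ := hdvd
    have hk0 : 0 ≤ k := by
      have hQ : 0 < ∏ i, (p i : ℤ) := prod_pos fun i _ ↦ by exact_mod_cast hp i
      nlinarith
    let i₀ : ι := Classical.arbitrary ι
    let x : ι → ℤ := fun i ↦ minCoeff p p' n i + if i = i₀ then k * p i₀ else 0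
    have hx : ∀ i, 0 ≤ x i := fun i ↦
      add_nonneg (minCoeff_nonneg p p' hp n i) (by split_ifs <;> positivity)
    refine ⟨fun i ↦ (x i).toNat, ?_⟩
    zify
    simp_rw [Int.toNat_of_nonneg (hx _)]
    have hQ : (p i₀ : ℤ) * cofactor p i₀ = ∏ i, (p i : ℤ) := by
      exact_mod_cast mul_cofactor p i₀
    simp only [x, add_mul, ite_mul, zero_mul, sum_add_distrib, sum_ite_eq', mem_univ, ↓reduceIte]
    rw [← minSum]
    linear_combination hk - k * hQ

end CofactorSemigroup

lemma natCast_mul_ceil_div (a : ℤ) (m : ℕ) : (m : ℤ) * ⌈(a : ℚ) / m⌉ = a + -a % m := by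
  rw [Rat.ceil_intCast_div_natCast]
  linear_combination -(Int.mul_ediv_add_emod (-a) m)

lemma prod_mul_sum_ceil {ι : Type*} [Fintype ι] [DecidableEq ι] (p p' : ι → ℕ) (n : ℕ) :
    (∏ i, (p i : ℤ)) * ∑ i, ⌈(n * p' i : ℚ) / p i⌉
      = n * ∑ i, (cofactor p i : ℤ) * p' i + minSum p p' n := by
  rw [mul_sum, mul_sum, minSum, ← sum_add_distrib]
  refine sum_congr rfl fun i _ ↦ ?_
  have hceil := natCast_mul_ceil_div (n * p' i) (p i)
  push_cast at hceil
  have hQ : ∏ j, (p j : ℤ) = p i * cofactor p i := by exact_mod_cast (mul_cofactor p i).symm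
  rw [hQ, minCoeff]
  linear_combination (cofactor p i : ℤ) * hceil

theorem stmt_10_general (l : ℕ) (hl : 4 ≤ l) (p : Fin l → ℕ)
    (hp1 : ∀ i, 1 < p i)
    (e0 : ℤ) (p' : Fin l → ℕ)
    (heq : e0 * ∏ i, (p i : ℤ)
      + ∑ i, (∏ j ∈ Finset.univ.erase i, (p j : ℤ)) * (p' i : ℤ) = -1)
    (Δ : ℕ → ℤ)
    (hΔ : ∀ n : ℕ, Δ n = 1 + |e0| * n - ∑ i, ⌈(n * p' i : ℚ) / p i⌉)
    (N0 : ℕ) :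
    ∀ n : ℕ, n ≤ N0 →
      (1 ≤ Δ n ↔ ∃ x : Fin l → ℕ, n = ∑ i, x i * ∏ j ∈ Finset.univ.erase i, p j) := by
  intro n _
  have hp : ∀ i, 0 < p i := fun i ↦ zero_lt_one.trans (hp1 i)
  have : Nonempty (Fin l) := ⟨⟨0, by omega⟩⟩
  have heq' : e0 * ∏ i, (p i : ℤ) + ∑ i, (cofactor p i : ℤ) * p' i = -1 := by
    simpa only [cofactor, Nat.cast_prod] using heq
  have hQ : 0 < ∏ i, (p i : ℤ) := prod_pos fun i _ ↦ by exact_mod_cast hp i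
  have he0 : e0 < 0 := by
    have : 0 ≤ ∑ i, (cofactor p i : ℤ) * p' i := sum_nonneg fun i _ ↦ by positivity
    nlinarith
  have hkey : (∏ i, (p i : ℤ)) * (Δ n - 1) = n - minSum p p' n := by
    rw [hΔ, abs_of_neg he0]
    linear_combination -prod_mul_sum_ceil p p' n - n * heq'
  have hrepr := exists_repr_iff_minSum_le (n := n) hp (dvd_cofactor_mul_add_one p p' heq')
    ⟨Δ n - 1, hkey.symm⟩
  refine Iff.trans ?_ hrepr.symm
  rw [← sub_nonneg, ← mul_nonneg_iff_of_pos_left hQ, hkey, sub_nonneg]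

/-- For `l ≥ 4` and `0 ≤ n ≤ N₀`: `Δ(n) ≥ 1` iff `n` belongs to the numerical semigroup
generated by the numbers `P/pᵢ`, `i = 1, …, l`. -/
theorem stmt_10 (l : ℕ) (hl : 4 ≤ l) (p : Fin l → ℕ)
    (hp1 : ∀ i, 1 < p i) (hmono : StrictMono p)
    (hcop : ∀ i j, i ≠ j → Nat.Coprime (p i) (p j))
    (e0 : ℤ) (p' : Fin l → ℕ) (hp' : ∀ i, p' i ≤ p i - 1)
    (heq : e0 * ∏ i, (p i : ℤ)
      + ∑ i, (∏ j ∈ Finset.univ.erase i, (p j : ℤ)) * (p' i : ℤ) = -1)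
    (Δ : ℕ → ℤ)
    (hΔ : ∀ n : ℕ, Δ n = 1 + |e0| * n - ∑ i, ⌈(n * p' i : ℚ) / p i⌉)
    (N0 : ℕ)
    (hN0 : (N0 : ℤ) = ((l : ℤ) - 2) * ∏ i, (p i : ℤ)
      - ∑ i, ∏ j ∈ Finset.univ.erase i, (p j : ℤ)) :
    ∀ n : ℕ, n ≤ N0 →
      (1 ≤ Δ n ↔ ∃ x : Fin l → ℕ, n = ∑ i, x i * ∏ j ∈ Finset.univ.erase i, p j) :=
  stmt_10_general l hl p hp1 e0 p' heq Δ hΔ N0
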